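/- arXiv:1108.4211 — 2 statements merged into one kernel-verified Lean document; each statement's English description precedes it below -/
import Mathlib

section
/- Let Γ be a compact Riemann surface carrying two ℝ-linearly independent meromorphic differentials Φ₁, Φ₂, each with a single double pole at p₀ and all periods integers. Set τ = Φ₂/Φ₁(p₀) (ratio of singular parts), assumed with Im τ > 0. Then dz := Φ₂ − τΦ₁ is a holomorphic differential on Γ whose periods all lie in the lattice ℤ + τℤ, so integration of dz defines a holomorphic map z : Γ → E = ℂ/(ℤ + τℤ). -/
/-- Let `Φ₁, Φ₂` be ℝ-linearly independent meromorphic differentials on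
a compact Riemann surface, each with a single double pole at `p₀` (so `singPart ω` is the
coefficient of `dz/z²` and `singPart ω = 0` forces `ω` holomorphic) and all periods
integers. Set `τ = (Φ₂/Φ₁)(p₀) = singPart Φ₂ / singPart Φ₁`, assumed with `Im τ > 0`.
Then `dz := Φ₂ − τ·Φ₁` is a holomorphic differential all of whose periods lie in the
lattice `ℤ + τℤ` (so integrating it defines a holomorphic map `z : Γ → E = ℂ/(ℤ + τℤ)`). -/
theorem calogero_moser_cover_differential
    (W : Type) [AddCommGroup W] [Module ℂ W]
    (Cycle : Type) (period : W →ₗ[ℂ] (Cycle → ℂ))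
    (Holomorphic : W → Prop) (singPart : W →ₗ[ℂ] ℂ)
    (holo_of_no_pole : ∀ ω : W, singPart ω = 0 → Holomorphic ω)
    (Φ₁ Φ₂ : W)
    (hli : ∀ a b : ℝ, (a : ℂ) • Φ₁ + (b : ℂ) • Φ₂ = 0 → a = 0 ∧ b = 0)
    (hint1 : ∀ γ : Cycle, ∃ n : ℤ, period Φ₁ γ = n)
    (hint2 : ∀ γ : Cycle, ∃ n : ℤ, period Φ₂ γ = n)
    (hs1 : singPart Φ₁ ≠ 0)
    (τ : ℂ) (hτdef : τ = singPart Φ₂ / singPart Φ₁) (hτ : 0 < τ.im) :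
    Holomorphic (Φ₂ - τ • Φ₁) ∧
    ∀ γ : Cycle, ∃ m n : ℤ, period (Φ₂ - τ • Φ₁) γ = (m : ℂ) + τ * (n : ℂ) := by
  constructor
  · apply holo_of_no_pole
    rw [map_sub, map_smul, hτdef, smul_eq_mul, div_mul_cancel₀ _ hs1, sub_self]
  · intro γ
    obtain ⟨n₁, h1⟩ := hint1 γ
    obtain ⟨n₂, h2⟩ := hint2 γ
    refine ⟨n₂, -n₁, ?_⟩
    have : period (Φ₂ - τ • Φ₁) γ = period Φ₂ γ - τ * period Φ₁ γ := by
      simp [map_sub, map_smul]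
    rw [this, h1, h2]
    push_cast
    ring
end

section
/- Let Ψ₁ be a meromorphic differential on Γ with all periods real and a single double pole at p₀, and let f₁ := Im ∫^p Ψ₁ be the (well-defined, single-valued) imaginary part of its abelian integral. For a regular value c of f₁, along any arc of the level set C_c = {f₁ = c} avoiding zeros of Ψ₁, the real part Re ∫ Ψ₁ is strictly monotone; consequently, if γ ⊂ C_c is a closed loop whose endpoints are a zero q of Ψ₁, then ∫_γ Ψ₁ is a positive real number, and in particular γ is homologically nontrivial. -/
/-- Let `Ψ₁` be a meromorphic differential with all periods real and a
single double pole at `p₀`, and `f₁ = Im ∫ Ψ₁` its single-valued imaginary part. Let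
`A : [0,1] → ℂ` be the abelian integral `∫ Ψ₁` along an arc of a level set `{f₁ = c}`
avoiding zeros of `Ψ₁` (so `A' = Ψ₁∘γ·γ'` is continuous and nonvanishing, and `Im A ≡ c`),
oriented so that `Re A` increases (`0 < (A' 0).re`). Then `Re A` is strictly monotone
(increasing) on `[0,1]`; consequently, if the arc is a closed loop `γ` whose endpoints are
a zero `q` of `Ψ₁`, then `∫_γ Ψ₁ = A 1 − A 0` is a positive real number, and `γ` is
homologically nontrivial (its class `γcls ∈ H₁(Γ,ℤ)` is nonzero, since the period
homomorphism sends it to `A 1 − A 0 ≠ 0`). -/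
theorem level_set_monotonicity_and_nontrivial_loop
    (A A' : ℝ → ℂ) (c : ℝ)
    (hA : ∀ t ∈ Set.Icc (0 : ℝ) 1, HasDerivAt A (A' t) t)
    (hA'cont : ContinuousOn A' (Set.Icc (0 : ℝ) 1))
    (hA'ne : ∀ t ∈ Set.Icc (0 : ℝ) 1, A' t ≠ 0)
    (hlevel : ∀ t ∈ Set.Icc (0 : ℝ) 1, (A t).im = c)
    (horient : 0 < (A' 0).re)
    (H : Type) [AddCommGroup H] (γcls : H) (periodHom : H →+ ℂ)
    (hper : periodHom γcls = A 1 - A 0) :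
    StrictMonoOn (fun t => (A t).re) (Set.Icc (0 : ℝ) 1) ∧
    ((A 1 - A 0).im = 0 ∧ 0 < (A 1 - A 0).re) ∧
    γcls ≠ 0 := by
  -- derivative of the real part
  have hre : ∀ t ∈ Set.Icc (0 : ℝ) 1, HasDerivAt (fun t => (A t).re) ((A' t).re) t := by
    intro t ht
    exact (Complex.reCLM.hasFDerivAt.comp_hasDerivAt t (hA t ht))
  -- imaginary part of A' vanishes on the interior
  have him0 : ∀ t ∈ Set.Ioo (0 : ℝ) 1, (A' t).im = 0 := by
    intro t ht
    have him : HasDerivAt (fun t => (A t).im) ((A' t).im) t :=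
      Complex.imCLM.hasFDerivAt.comp_hasDerivAt t (hA t (Set.Ioo_subset_Icc_self ht))
    have hconst : HasDerivAt (fun t => (A t).im) 0 t := by
      have : (fun s : ℝ => (A s).im) =ᶠ[nhds t] fun _ => c := by
        filter_upwards [Ioo_mem_nhds ht.1 ht.2] with s hs
        exact hlevel s (Set.Ioo_subset_Icc_self hs)
      exact (hasDerivAt_const t c).congr_of_eventuallyEq this
    exact him.unique hconst
  -- by continuity, im A' vanishes on all of Icc
  have himIcc : ∀ t ∈ Set.Icc (0 : ℝ) 1, (A' t).im = 0 := by
    have hcont : ContinuousOn (fun t => (A' t).im) (Set.Icc (0 : ℝ) 1) :=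
      Complex.continuous_im.comp_continuousOn hA'cont
    have hIcc : Set.Icc (0 : ℝ) 1 = closure (Set.Ioo (0 : ℝ) 1) := (closure_Ioo one_ne_zero.symm).symm
    intro t ht
    have : t ∈ closure (Set.Ioo (0 : ℝ) 1) := hIcc ▸ ht
    rcases mem_closure_iff_seq_limit.1 this with ⟨u, hu, hut⟩
    have h1 : Filter.Tendsto (fun n => (A' (u n)).im) Filter.atTop (nhds ((A' t).im)) :=
      (hcont t ht).tendsto.comp (by
        refine tendsto_nhdsWithin_of_tendsto_nhds_of_eventually_within _ hut ?_
        filter_upwards with n using Set.Ioo_subset_Icc_self (hu n))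
    have h2 : Filter.Tendsto (fun n => (A' (u n)).im) Filter.atTop (nhds 0) := by
      have : (fun n => (A' (u n)).im) = fun _ => (0:ℝ) := funext fun n => him0 _ (hu n)
      rw [this]; exact tendsto_const_nhds
    exact tendsto_nhds_unique h1 h2
  -- re A' ≠ 0 on Icc
  have hrene : ∀ t ∈ Set.Icc (0 : ℝ) 1, (A' t).re ≠ 0 := by
    intro t ht h0
    exact hA'ne t ht (Complex.ext h0 (himIcc t ht))
  -- re A' > 0 on Icc, by IVT from positivity at 0
  have hrepos : ∀ t ∈ Set.Icc (0 : ℝ) 1, 0 < (A' t).re := by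
    intro t ht
    by_contra h
    push_neg at h
    have hlt : (A' t).re < 0 := lt_of_le_of_ne h (hrene t ht)
    have hcont : ContinuousOn (fun s => (A' s).re) (Set.Icc (0 : ℝ) t) :=
      (Complex.continuous_re.comp_continuousOn hA'cont).mono
        (Set.Icc_subset_Icc le_rfl ht.2)
    have h0mem : (0:ℝ) ∈ Set.Icc ((A' t).re) ((A' 0).re) := ⟨hlt.le, horient.le⟩
    rcases intermediate_value_Icc' ht.1 hcont h0mem with ⟨s, hs, hs0⟩
    exact hrene s (Set.Icc_subset_Icc le_rfl ht.2 hs) hs0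
  -- strict monotonicity
  have hmono : StrictMonoOn (fun t => (A t).re) (Set.Icc (0 : ℝ) 1) := by
    apply strictMonoOn_of_deriv_pos (convex_Icc 0 1)
    · exact fun t ht => (hre t ht).continuousAt.continuousWithinAt
    · intro t ht
      rw [interior_Icc] at ht
      rw [(hre t (Set.Ioo_subset_Icc_self ht)).deriv]
      exact hrepos t (Set.Ioo_subset_Icc_self ht)
  have h01 : ((0:ℝ) ∈ Set.Icc (0:ℝ) 1) := ⟨le_rfl, zero_le_one⟩
  have h11 : ((1:ℝ) ∈ Set.Icc (0:ℝ) 1) := ⟨zero_le_one, le_rfl⟩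
  have hre01 : (A 0).re < (A 1).re := hmono h01 h11 zero_lt_one
  refine ⟨hmono, ⟨?_, ?_⟩, ?_⟩
  · simp [Complex.sub_im, hlevel 0 h01, hlevel 1 h11]
  · simpa [Complex.sub_re] using sub_pos.2 hre01
  · intro h0
    rw [h0, map_zero] at hper
    have : (A 1 - A 0).re = 0 := by rw [← hper]; simp
    rw [Complex.sub_re] at this
    linarith
end
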